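/- arXiv:2507.16085 — 2 statements merged into one kernel-verified Lean document; each statement's English description precedes it below -/
import Mathlib

section
/- Continuous weak solutions are mild solutions (uniqueness part of Lemma 2.1): let U be an evolution family for D, let t₀ ∈ ℝ, let u, f : ℝ → 𝓗 be continuous, and suppose that the equation Du = f holds weakly, i.e. ∫_ℝ ⟨ iφ′(t) + H(t)φ(t), u(t) ⟩ dt = ∫_ℝ ⟨ φ(t), f(t) ⟩ dt for every compactly supported continuously differentiable φ : ℝ → 𝓗 with φ(t) ∈ 𝒟 for all t and t ↦ H₀φ(t) continuous. Then u(t) = U(t,t₀)u(t₀) − i ∫_{t₀}^{t} U(t,s) f(s) ds for every t ∈ ℝ. In particular, a continuous weak solution of Du = 0 which vanishes at one time vanishes identically. -/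
open scoped ComplexInnerProductSpace
open MeasureTheory Set Function intervalIntegral
open scoped ContDiff



/-- Antiderivative of a compactly supported continuous function with zero integral is a
compactly supported `C¹` function. -/
private lemma exists_antideriv (ψ : ℝ → ℝ) (hc : Continuous ψ) (hs : HasCompactSupport ψ)
    (h0 : ∫ t, ψ t = 0) :
    ∃ χ : ℝ → ℝ, ContDiff ℝ 1 χ ∧ HasCompactSupport χ ∧ deriv χ = ψ := by
  obtain ⟨R, hR⟩ := hs.isBounded.subset_closedBall 0
  set a : ℝ := -R - 1 with ha
  set b : ℝ := R + 1 with hb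
  have hsub : tsupport ψ ⊆ Ioo a b := by
    intro x hx
    have h := hR hx
    rw [Real.closedBall_eq_Icc] at h
    constructor
    · have : 0 - R ≤ x := h.1
      simp only [ha]; linarith
    · have : x ≤ 0 + R := h.2
      simp only [hb]; linarith
  have hzero : ∀ x, x ∉ Ioo a b → ψ x = 0 := fun x hx =>
    image_eq_zero_of_notMem_tsupport (fun h => hx (hsub h))
  set χ : ℝ → ℝ := fun t => ∫ s in a..t, ψ s with hχdef
  have hd : ∀ t, HasDerivAt χ (ψ t) t := fun t =>
    (hc.integral_hasStrictDerivAt a t).hasDerivAt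
  have hderiv : deriv χ = ψ := funext fun t => (hd t).deriv
  refine ⟨χ, contDiff_one_iff_deriv.mpr
    ⟨fun t => (hd t).differentiableAt, by rw [hderiv]; exact hc⟩, ?_, hderiv⟩
  have hsupp : support χ ⊆ Icc a b := by
    intro t ht
    by_contra hmem
    apply ht
    rw [mem_Icc, not_and_or, not_le, not_le] at hmem
    rcases hmem with h | h
    · -- t < a
      have : EqOn ψ 0 (uIcc a t) := by
        intro s hsm
        have hs' : s ≤ a := by
          rcases mem_uIcc.mp hsm with h1 | h1
          · linarith [h1.2]
          · linarith [h1.2]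
        exact hzero s (by simp [mem_Ioo]; intro h2; linarith)
      simp only [hχdef]
      rw [intervalIntegral.integral_congr this]
      simp
    · -- b < t
      have h1 : support ψ ⊆ Ioc a t := fun s hsm => by
        have := hsub (subset_tsupport ψ hsm)
        exact ⟨this.1, le_of_lt (lt_of_lt_of_le this.2 (le_of_lt h))⟩
      simp only [hχdef]
      rw [intervalIntegral.integral_eq_integral_of_support_subset h1, h0]
  exact HasCompactSupport.of_support_subset_isCompact isCompact_Icc hsupp

/-- du Bois-Reymond: a continuous function whose integral against the derivative of every
compactly supported `C¹` function vanishes is constant. -/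
private lemma duBoisReymond (w : ℝ → ℂ) (hw : Continuous w)
    (hyp : ∀ χ : ℝ → ℝ, ContDiff ℝ 1 χ → HasCompactSupport χ →
      ∫ t, deriv χ t • w t = 0) (a b : ℝ) : w a = w b := by
  let ρbump : ContDiffBump (0 : ℝ) := ⟨1, 2, one_pos, one_lt_two⟩
  set ρ : ℝ → ℝ := ρbump.normed volume with hρ
  have hρc : Continuous ρ := ρbump.continuous_normed
  have hρs : HasCompactSupport ρ := ρbump.hasCompactSupport_normed
  have hρi : ∫ t, ρ t = 1 := ρbump.integral_normed
  set c : ℂ := ∫ t, ρ t • w t with hc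
  have key : ∀ gg : ℝ → ℝ, ContDiff ℝ ∞ gg → HasCompactSupport gg →
      ∫ t, gg t • (w t - c) = 0 := by
    intro gg hgg hggs
    have hggc : Continuous gg := hgg.continuous
    set r : ℝ := ∫ t, gg t with hr
    set ψ : ℝ → ℝ := fun t => gg t - r • ρ t with hψ
    have hψc : Continuous ψ := hggc.sub (hρc.const_smul r)
    have hψs : HasCompactSupport ψ := by
      apply HasCompactSupport.of_support_subset_isCompact (hggs.union hρs)
      intro t ht
      by_contra hnot
      rw [mem_union] at hnot
      push_neg at hnot
      have h1 : gg t = 0 := image_eq_zero_of_notMem_tsupport hnot.1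
      have h2 : ρ t = 0 := image_eq_zero_of_notMem_tsupport hnot.2
      exact ht (by simp [hψ, h1, h2])
    have hψ0 : ∫ t, ψ t = 0 := by
      have hρint : Integrable (fun t => r • ρ t) :=
        (hρc.integrable_of_hasCompactSupport hρs).smul r
      rw [integral_sub (hggc.integrable_of_hasCompactSupport hggs) hρint]
      rw [MeasureTheory.integral_smul, hρi]
      simp [← hr]
    obtain ⟨χ, hχ1, hχ2, hχ3⟩ := exists_antideriv ψ hψc hψs hψ0
    have h0 := hyp χ hχ1 hχ2
    rw [hχ3] at h0
    have hint1 : Integrable (fun t => gg t • w t) := by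
      exact ((hggc.smul hw).integrable_of_hasCompactSupport hggs.smul_right)
    have hint2 : Integrable (fun t => r • (ρ t • w t)) :=
      Integrable.smul r ((hρc.smul hw).integrable_of_hasCompactSupport hρs.smul_right)
    have hsplit : ∫ t, ψ t • w t = (∫ t, gg t • w t) - r • c := by
      have : (fun t => ψ t • w t) = fun t => gg t • w t - r • (ρ t • w t) := by
        funext t; simp [hψ, sub_smul, smul_assoc, mul_assoc]
      rw [this, integral_sub hint1 hint2, MeasureTheory.integral_smul]
    rw [hsplit] at h0
    have hint3 : Integrable (fun t => gg t • c) := by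
      exact ((hggc.smul continuous_const).integrable_of_hasCompactSupport hggs.smul_right)
    have : (fun t => gg t • (w t - c)) = fun t => gg t • w t - gg t • c := by
      funext t; simp [smul_sub]
    rw [this, integral_sub hint1 hint3, _root_.integral_smul_const, ← hr]
    rw [sub_eq_zero] at h0 ⊢
    rw [h0]
  have hae := ae_eq_zero_of_integral_contDiff_smul_eq_zero
    ((hw.sub continuous_const).locallyIntegrable) key
  have heq : (fun t => w t - c) = fun _ => (0 : ℂ) :=
    (Continuous.ae_eq_iff_eq volume (hw.sub continuous_const) continuous_const).mp hae
  have h1 : w a - c = 0 := congrFun heq a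
  have h2 : w b - c = 0 := congrFun heq b
  rw [sub_eq_zero] at h1 h2
  rw [h1, h2]



private lemma weak_deriv_integral (g h : ℝ → ℂ) (hg : Continuous g) (hh : Continuous h)
    (hyp : ∀ χ : ℝ → ℝ, ContDiff ℝ 1 χ → HasCompactSupport χ →
      ∫ t, deriv χ t • g t = - ∫ t, χ t • h t) (a b : ℝ)
    (hDBR : ∀ w : ℝ → ℂ, Continuous w → (∀ χ : ℝ → ℝ, ContDiff ℝ 1 χ → HasCompactSupport χ →
      ∫ t, deriv χ t • w t = 0) → ∀ a b : ℝ, w a = w b) :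
    g b = g a + ∫ s in a..b, h s := by
  set G : ℝ → ℂ := fun t => ∫ s in (0:ℝ)..t, h s with hG
  have hGd : ∀ t, HasDerivAt G (h t) t := fun t =>
    (hh.integral_hasStrictDerivAt 0 t).hasDerivAt
  have hGc : Continuous G := by
    rw [continuous_iff_continuousAt]
    exact fun t => (hGd t).continuousAt
  have key : ∀ χ : ℝ → ℝ, ContDiff ℝ 1 χ → HasCompactSupport χ →
      ∫ t, deriv χ t • (g t - G t) = 0 := by
    intro χ hχ hχs
    have hχc : Continuous χ := hχ.continuous
    have hχd : Continuous (deriv χ) := hχ.continuous_deriv le_rfl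
    have hχds : HasCompactSupport (deriv χ) := hχs.deriv
    have hint1 : Integrable (fun t => deriv χ t • g t) :=
      (hχd.smul hg).integrable_of_hasCompactSupport hχds.smul_right
    have hint2 : Integrable (fun t => deriv χ t • G t) :=
      (hχd.smul hGc).integrable_of_hasCompactSupport hχds.smul_right
    have hsplit : ∫ t, deriv χ t • (g t - G t)
        = (∫ t, deriv χ t • g t) - ∫ t, deriv χ t • G t := by
      simp_rw [smul_sub]
      exact integral_sub hint1 hint2
    obtain ⟨R, hR⟩ := hχs.isBounded.subset_closedBall 0
    set p : ℝ := -R - 1 with hp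
    set q : ℝ := R + 1 with hq
    have hsubIoo : tsupport χ ⊆ Ioo p q := by
      intro x hx
      have hx' := hR hx
      rw [Real.closedBall_eq_Icc] at hx'
      constructor
      · have : 0 - R ≤ x := hx'.1
        simp only [hp]; linarith
      · have : x ≤ 0 + R := hx'.2
        simp only [hq]; linarith
    have hχp : χ p = 0 :=
      image_eq_zero_of_notMem_tsupport (fun hm => lt_irrefl p (hsubIoo hm).1)
    have hχq : χ q = 0 :=
      image_eq_zero_of_notMem_tsupport (fun hm => lt_irrefl q (hsubIoo hm).2)
    have hibp : ∫ t in p..q, (Complex.ofReal (deriv χ t) * G t + Complex.ofReal (χ t) * h t)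
        = Complex.ofReal (χ q) * G q - Complex.ofReal (χ p) * G p := by
      apply intervalIntegral.integral_deriv_mul_eq_sub
        (u := fun t => Complex.ofReal (χ t)) (v := G) (u' := fun t => Complex.ofReal (deriv χ t)) (v' := h)
      · intro x _
        exact ((hχ.differentiable one_ne_zero).differentiableAt.hasDerivAt).ofReal_comp
      · intro x _
        exact hGd x
      · exact (Complex.continuous_ofReal.comp hχd).intervalIntegrable p q
      · exact hh.intervalIntegrable p q
    rw [hχp, hχq] at hibp
    simp only [Complex.ofReal_zero, zero_mul, sub_zero] at hibp
    have hadd : ∫ t in p..q, (Complex.ofReal (deriv χ t) * G t + Complex.ofReal (χ t) * h t)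
        = (∫ t in p..q, Complex.ofReal (deriv χ t) * G t) + ∫ t in p..q, Complex.ofReal (χ t) * h t := by
      apply intervalIntegral.integral_add
      · exact ((Complex.continuous_ofReal.comp hχd).mul hGc).intervalIntegrable p q
      · exact ((Complex.continuous_ofReal.comp hχc).mul hh).intervalIntegrable p q
    have e1 : ∫ t in p..q, Complex.ofReal (deriv χ t) * G t = ∫ t, deriv χ t • G t := by
      simp_rw [Complex.real_smul]
      apply intervalIntegral.integral_eq_integral_of_support_subset
      intro t ht
      have h1 : deriv χ t ≠ 0 := by
        intro hz
        apply ht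
        simp [hz]
      have h2 := support_deriv_subset (f := χ) h1
      exact ⟨(hsubIoo h2).1, le_of_lt (lt_of_lt_of_le (hsubIoo h2).2 le_rfl)⟩
    have e2 : ∫ t in p..q, Complex.ofReal (χ t) * h t = ∫ t, χ t • h t := by
      simp_rw [Complex.real_smul]
      apply intervalIntegral.integral_eq_integral_of_support_subset
      intro t ht
      have h1 : χ t ≠ 0 := by
        intro hz
        apply ht
        simp [hz]
      have h2 := subset_tsupport χ h1
      exact ⟨(hsubIoo h2).1, le_of_lt (hsubIoo h2).2⟩
    have eG : ∫ t, deriv χ t • G t = - ∫ t, χ t • h t := by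
      rw [← e1, ← e2]
      have h3 := hadd.symm.trans hibp
      linear_combination h3
    rw [hsplit, hyp χ hχ hχs, eG]
    ring
  have hconst := hDBR (fun t => g t - G t) (hg.sub hGc) key a b
  have hGint : G b - G a = ∫ s in a..b, h s :=
    intervalIntegral.integral_interval_sub_left (hh.intervalIntegrable 0 b)
      (hh.intervalIntegrable 0 a)
  linear_combination hconst.symm + hGint

variable {𝓗 : Type*} [NormedAddCommGroup 𝓗] [InnerProductSpace ℂ 𝓗] [CompleteSpace 𝓗]

private lemma unitary_inner {V : 𝓗 →L[ℂ] 𝓗} (hV : V ∈ unitary (𝓗 →L[ℂ] 𝓗)) (x y : 𝓗) :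
    ⟪V x, V y⟫ = ⟪x, y⟫ := by
  have h1 : star V * V = 1 := (Unitary.mem_iff.mp hV).1
  have h2 : ⟪x, (ContinuousLinearMap.adjoint V) (V y)⟫ = ⟪V x, V y⟫ :=
    ContinuousLinearMap.adjoint_inner_right V x (V y)
  rw [← h2, ← ContinuousLinearMap.star_eq_adjoint, ← ContinuousLinearMap.mul_apply, h1,
    ContinuousLinearMap.one_apply]

private lemma unitary_norm_apply {V : 𝓗 →L[ℂ] 𝓗} (hV : V ∈ unitary (𝓗 →L[ℂ] 𝓗)) (x : 𝓗) :
    ‖V x‖ = ‖x‖ := by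
  have h := unitary_inner hV x x
  have h2 : ‖V x‖ ^ 2 = ‖x‖ ^ 2 := by
    rw [← @inner_self_eq_norm_sq ℂ _ _ _ _ (V x), ← @inner_self_eq_norm_sq ℂ _ _ _ _ x, h]
  have h3 := congrArg Real.sqrt h2
  rwa [Real.sqrt_sq (norm_nonneg _), Real.sqrt_sq (norm_nonneg _)] at h3

private lemma continuous_apply_family {V : ℝ → 𝓗 →L[ℂ] 𝓗}
    (hVx : ∀ x, Continuous fun s => V s x) (hiso : ∀ (s : ℝ) (x : 𝓗), ‖V s x‖ = ‖x‖)
    {y : ℝ → 𝓗} (hy : Continuous y) : Continuous fun s => V s (y s) := by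
  rw [continuous_iff_continuousAt]
  intro s₀
  have h1 : Filter.Tendsto (fun s => V s (y s) - V s (y s₀)) (nhds s₀) (nhds 0) := by
    rw [tendsto_zero_iff_norm_tendsto_zero]
    have heq : (fun s => ‖V s (y s) - V s (y s₀)‖) = fun s => ‖y s - y s₀‖ := by
      funext s; rw [← map_sub]; exact hiso s _
    rw [heq]
    have h2 : Filter.Tendsto (fun s => y s - y s₀) (nhds s₀) (nhds 0) := by
      have := (hy.tendsto s₀).sub (tendsto_const_nhds (x := y s₀))
      simpa using this
    simpa using h2.norm
  have h2 := (hVx (y s₀)).tendsto s₀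
  have h3 := h1.add h2
  simp only [zero_add] at h3
  have heq2 : (fun s => V s (y s) - V s (y s₀) + V s (y s₀)) = fun s => V s (y s) := by
    funext s; abel
  rwa [heq2] at h3

private lemma inner_real_smul_left (r : ℝ) (v w : 𝓗) : ⟪r • v, w⟫ = (r : ℂ) * ⟪v, w⟫ := by
  rw [← algebraMap_smul ℂ r v, inner_smul_left]
  simp [Complex.coe_algebraMap, Complex.conj_ofReal]

/-- `H₀` is (the action on its domain `𝒟` of) a densely defined self-adjoint operator. -/
def IsSelfAdjointOn (H₀ : 𝓗 →ₗ[ℂ] 𝓗) (𝒟 : Submodule ℂ 𝓗) : Prop :=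
  Dense (𝒟 : Set 𝓗) ∧
  (∀ x ∈ 𝒟, ∀ y ∈ 𝒟, ⟪H₀ x, y⟫ = ⟪x, H₀ y⟫) ∧
  (∀ y z : 𝓗, (∀ x ∈ 𝒟, ⟪H₀ x, y⟫ = ⟪x, z⟫) → y ∈ 𝒟 ∧ H₀ y = z)

/-- An evolution family for `D = i∂ₜ + H(t)`, `H(t) = H₀ + B(t)`: a two-parameter family of
unitaries with `U(t,t) = 1`, the groupoid property, joint strong continuity, invariance of the
domain `𝒟`, such that for `x ∈ 𝒟` the map `t ↦ U(t,s)x` is continuously differentiable with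
derivative `iH(t)U(t,s)x`. -/
def IsEvolutionFamily (H₀ : 𝓗 →ₗ[ℂ] 𝓗) (𝒟 : Submodule ℂ 𝓗) (B : ℝ → 𝓗 →L[ℂ] 𝓗)
    (U : ℝ → ℝ → 𝓗 →L[ℂ] 𝓗) : Prop :=
  (∀ t s, U t s ∈ unitary (𝓗 →L[ℂ] 𝓗)) ∧
  (∀ t, U t t = 1) ∧
  (∀ t₁ t t₂, (U t₁ t).comp (U t t₂) = U t₁ t₂) ∧
  (∀ x : 𝓗, Continuous fun p : ℝ × ℝ => U p.1 p.2 x) ∧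
  (∀ t s, ∀ x ∈ 𝒟, U t s x ∈ 𝒟) ∧
  (∀ s : ℝ, ∀ x ∈ 𝒟,
    (∀ t : ℝ, HasDerivAt (fun τ => U τ s x)
      (Complex.I • (H₀ (U t s x) + B t (U t s x))) t) ∧
    Continuous fun t : ℝ => Complex.I • (H₀ (U t s x) + B t (U t s x)))


/-- **Continuous weak solutions are mild solutions** (uniqueness part of Lemma 2.1):
if `u, f : ℝ → 𝓗` are continuous and `Du = f` holds weakly against all compactly supported
`C¹` test functions valued in `𝒟` with `H₀φ` continuous, then `u` is given by the Duhamel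
formula in terms of its value at any time `t₀`. -/
theorem weak_solution_is_mild
    (H₀ : 𝓗 →ₗ[ℂ] 𝓗) (𝒟 : Submodule ℂ 𝓗) (B : ℝ → 𝓗 →L[ℂ] 𝓗)
    (U : ℝ → ℝ → 𝓗 →L[ℂ] 𝓗)
    (hH₀ : IsSelfAdjointOn H₀ 𝒟)
    (hBsa : ∀ t, IsSelfAdjoint (B t))
    (hBsmooth : ContDiff ℝ (⊤ : ℕ∞) B)
    (hU : IsEvolutionFamily H₀ 𝒟 B U)
    (t₀ : ℝ) (u f : ℝ → 𝓗) (hu : Continuous u) (hf : Continuous f)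
    (hweak : ∀ φ : ℝ → 𝓗, ContDiff ℝ 1 φ → HasCompactSupport φ →
      (∀ t, φ t ∈ 𝒟) → Continuous (fun t => H₀ (φ t)) →
      (∫ t : ℝ, ⟪Complex.I • deriv φ t + (H₀ (φ t) + B t (φ t)), u t⟫)
        = ∫ t : ℝ, ⟪φ t, f t⟫) :
    ∀ t, u t = U t t₀ (u t₀) - Complex.I • ∫ s in t₀..t, U t s (f s) := by
  obtain ⟨hUun, hUid, hUgr, hUcont, hUdom, hUde⟩ := hU
  intro t
  have hVx : ∀ x : 𝓗, Continuous fun s => U t₀ s x := fun x =>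
    (hUcont x).comp (continuous_const.prodMk continuous_id)
  have hiso : ∀ (a s : ℝ) (x : 𝓗), ‖U a s x‖ = ‖x‖ := fun a s x =>
    unitary_norm_apply (hUun a s) x
  have hFc : Continuous fun s => U t₀ s (f s) :=
    continuous_apply_family hVx (fun s x => hiso t₀ s x) hf
  -- Step 1: the key identity on the dense domain
  have key : ∀ x ∈ 𝒟, ⟪x, U t₀ t (u t)⟫
      = ⟪x, u t₀ - Complex.I • ∫ s in t₀..t, U t₀ s (f s)⟫ := by
    intro x hx
    have hUd : ∀ τ : ℝ, HasDerivAt (fun τ => U τ t₀ x)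
        (Complex.I • (H₀ (U τ t₀ x) + B τ (U τ t₀ x))) τ := (hUde t₀ x hx).1
    have hKc : Continuous fun τ : ℝ =>
        Complex.I • (H₀ (U τ t₀ x) + B τ (U τ t₀ x)) := (hUde t₀ x hx).2
    have hψc : Continuous fun s => U s t₀ x :=
      (hUcont x).comp (continuous_id.prodMk continuous_const)
    have hgc : Continuous fun s : ℝ => (⟪U s t₀ x, u s⟫ : ℂ) := hψc.inner hu
    have hhc : Continuous fun s : ℝ => (⟪U s t₀ x, f s⟫ : ℂ) := hψc.inner hf
    -- distributional equation for g(s) = ⟪U s t₀ x, u s⟫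
    have hweak' : ∀ χ : ℝ → ℝ, ContDiff ℝ 1 χ → HasCompactSupport χ →
        ∫ s, deriv χ s • (⟪U s t₀ x, u s⟫ : ℂ)
          = - ∫ s, χ s • (-(Complex.I * ⟪U s t₀ x, f s⟫)) := by
      intro χ hχ hχs
      have hχc := hχ.continuous
      have hχd := hχ.continuous_deriv le_rfl
      set φ : ℝ → 𝓗 := fun s => χ s • U s t₀ x with hφ
      have hφd : ∀ s, HasDerivAt φ
          (χ s • (Complex.I • (H₀ (U s t₀ x) + B s (U s t₀ x))) + deriv χ s • U s t₀ x) s :=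
        fun s => ((hχ.differentiable one_ne_zero).differentiableAt.hasDerivAt).smul (hUd s)
      have hφderiv : deriv φ = fun s =>
          χ s • (Complex.I • (H₀ (U s t₀ x) + B s (U s t₀ x))) + deriv χ s • U s t₀ x :=
        funext fun s => (hφd s).deriv
      have hφ1 : ContDiff ℝ 1 φ := contDiff_one_iff_deriv.mpr
        ⟨fun s => (hφd s).differentiableAt, by
          rw [hφderiv]; exact (hχc.smul hKc).add (hχd.smul hψc)⟩
      have hφs : HasCompactSupport φ := by
        apply HasCompactSupport.of_support_subset_isCompact hχs
        intro s hs
        by_contra hns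
        have hz : χ s = 0 := image_eq_zero_of_notMem_tsupport hns
        apply hs
        show χ s • U s t₀ x = 0
        rw [hz, zero_smul]
      have hφdom : ∀ s, φ s ∈ 𝒟 := fun s =>
        Submodule.smul_of_tower_mem 𝒟 (χ s) (hUdom s t₀ x hx)
      have hH0φ : (fun s => H₀ (φ s)) = fun s =>
          χ s • ((-Complex.I) • (Complex.I • (H₀ (U s t₀ x) + B s (U s t₀ x))) - B s (U s t₀ x)) := by
        funext s
        rw [hφ]
        simp only
        rw [H₀.map_smul_of_tower]
        congr 1
        rw [smul_smul, neg_mul, Complex.I_mul_I, neg_neg, one_smul, add_sub_cancel_right]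
      have hH0c : Continuous fun s => H₀ (φ s) := by
        rw [hH0φ]
        exact hχc.smul ((continuous_const.smul hKc).sub
          (hBsmooth.continuous.clm_apply hψc))
      have h1 := hweak φ hφ1 hφs hφdom hH0c
      have e1 : (fun s => (⟪Complex.I • deriv φ s + (H₀ (φ s) + B s (φ s)), u s⟫ : ℂ))
          = fun s => (-Complex.I) * (Complex.ofReal (deriv χ s) * ⟪U s t₀ x, u s⟫) := by
        funext s
        have e0 : Complex.I • deriv φ s + (H₀ (φ s) + B s (φ s))
            = deriv χ s • (Complex.I • U s t₀ x) := by
          rw [hφderiv]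
          simp only
          have eH : H₀ (φ s) = χ s • H₀ (U s t₀ x) := H₀.map_smul_of_tower (χ s) _
          have eB : B s (φ s) = χ s • B s (U s t₀ x) := (B s).map_smul_of_tower (χ s) _
          rw [eH, eB]
          rw [smul_add, smul_comm (Complex.I) (deriv χ s), smul_comm (Complex.I) (χ s),
            smul_smul Complex.I Complex.I, Complex.I_mul_I, neg_one_smul, smul_neg, ← smul_add]
          abel
        rw [e0, inner_real_smul_left, inner_smul_left, Complex.conj_I]
        ring
      have e2 : (fun s => (⟪φ s, f s⟫ : ℂ)) = fun s => Complex.ofReal (χ s) * ⟪U s t₀ x, f s⟫ := by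
        funext s
        rw [hφ]
        exact inner_real_smul_left (χ s) _ _
      rw [e1, e2] at h1
      rw [MeasureTheory.integral_const_mul] at h1
      -- now h1 : -I * ∫ ↑(deriv χ s) * g s = ∫ ↑(χ s) * h s
      have h2 : ∫ s, Complex.ofReal (deriv χ s) * ⟪U s t₀ x, u s⟫
          = Complex.I * ∫ s, Complex.ofReal (χ s) * ⟪U s t₀ x, f s⟫ := by
        rw [← h1, ← mul_assoc]
        simp [Complex.I_mul_I]
      have e3 : ∀ s : ℝ, χ s • (-(Complex.I * (⟪U s t₀ x, f s⟫ : ℂ)))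
          = -(Complex.I * (Complex.ofReal (χ s) * ⟪U s t₀ x, f s⟫)) := by
        intro s
        rw [Complex.real_smul]
        ring
      simp_rw [e3, MeasureTheory.integral_neg, neg_neg, Complex.real_smul]
      rw [MeasureTheory.integral_const_mul]
      exact h2
    -- apply the distributional FTC
    have hmild := weak_deriv_integral _ _ hgc
      ((continuous_const.mul hhc).neg) hweak' t₀ t duBoisReymond
    -- rewrite the three inner products
    have hUinv : ∀ s : ℝ, U t₀ s (U s t₀ x) = x := fun s => by
      rw [← ContinuousLinearMap.comp_apply, hUgr, hUid, ContinuousLinearMap.one_apply]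
    have hgt : (⟪U t t₀ x, u t⟫ : ℂ) = ⟪x, U t₀ t (u t)⟫ := by
      rw [← unitary_inner (hUun t₀ t) (U t t₀ x) (u t), hUinv t]
    have hgt₀ : (⟪U t₀ t₀ x, u t₀⟫ : ℂ) = ⟪x, u t₀⟫ := by
      rw [hUid t₀, ContinuousLinearMap.one_apply]
    have hhs : ∀ s : ℝ, (⟪U s t₀ x, f s⟫ : ℂ) = ⟪x, U t₀ s (f s)⟫ := fun s => by
      rw [← unitary_inner (hUun t₀ s) (U s t₀ x) (f s), hUinv s]
    rw [hgt, hgt₀] at hmild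
    simp_rw [hhs] at hmild
    have hint : ∫ s in t₀..t, -(Complex.I * (⟪x, U t₀ s (f s)⟫ : ℂ))
        = -(Complex.I * ⟪x, ∫ s in t₀..t, U t₀ s (f s)⟫) := by
      rw [intervalIntegral.integral_neg, intervalIntegral.integral_const_mul]
      have := (innerSL ℂ x).intervalIntegral_comp_comm (hFc.intervalIntegrable (μ := MeasureTheory.volume) t₀ t)
      simp only [innerSL_apply_apply] at this
      rw [this]
    simp only [Pi.neg_apply, Pi.mul_apply] at hmild
    rw [hint] at hmild
    rw [hmild, inner_sub_right, inner_smul_right]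
    ring
  -- Step 2: density
  set v : 𝓗 := U t₀ t (u t) - (u t₀ - Complex.I • ∫ s in t₀..t, U t₀ s (f s)) with hv
  have hv0 : ∀ x ∈ 𝒟, ⟪v, x⟫ = (0 : ℂ) := by
    intro x hx
    have h1 : ⟪x, v⟫ = (0 : ℂ) := by
      rw [hv, inner_sub_right, key x hx, sub_self]
    rw [← inner_conj_symm, h1, map_zero]
  have hEqOn : Set.EqOn (fun y => (⟪v, y⟫ : ℂ)) (fun _ => (0 : ℂ)) (𝒟 : Set 𝓗) :=
    fun y hy => hv0 y hy
  have hEqCl : Set.EqOn (fun y => (⟪v, y⟫ : ℂ)) (fun _ => (0 : ℂ)) (closure (𝒟 : Set 𝓗)) :=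
    hEqOn.closure (continuous_const.inner continuous_id) continuous_const
  have hvv : (⟪v, v⟫ : ℂ) = 0 := hEqCl (by rw [hH₀.1.closure_eq]; trivial)
  have hveq : U t₀ t (u t) = u t₀ - Complex.I • ∫ s in t₀..t, U t₀ s (f s) :=
    sub_eq_zero.mp (inner_self_eq_zero.mp hvv)
  -- Step 3: apply U t t₀
  have happ := congrArg (U t t₀) hveq
  rw [← ContinuousLinearMap.comp_apply, hUgr, hUid, ContinuousLinearMap.one_apply] at happ
  rw [map_sub, ContinuousLinearMap.map_smul] at happ
  rw [← ContinuousLinearMap.intervalIntegral_comp_comm _ (hFc.intervalIntegrable (μ := MeasureTheory.volume) t₀ t)] at happ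
  have hcomp : ∀ s : ℝ, U t t₀ (U t₀ s (f s)) = U t s (f s) := fun s => by
    rw [← ContinuousLinearMap.comp_apply, hUgr]
  simp_rw [hcomp] at happ
  exact happ
end

section
/- Mellin boundedness lemma (Lemma 3.4): let f : (0,∞) → ℂ be continuous, let ε > 0, C₀ ≥ 0 and s > 1, and suppose: (i) for every ξ ∈ ℂ with −ε < Im ξ the integral (ℳf)(ξ) = ∫₀^∞ f(r) r^{−iξ−1} dr converges absolutely; (ii) the function ξ ↦ (ℳf)(ξ) is holomorphic on {ξ ∈ ℂ : Im ξ > −ε}; and (iii) |(ℳf)(ξ)| ≤ C₀ ⟨ξ⟩^{−s} for all ξ with Im ξ > −ε. Then f is bounded on (0,1) and sup_{r∈(0,1)} |f(r)| ≤ (1/2π) ∫_{−∞}^{∞} |(ℳf)(ξ)| dξ < ∞. -/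
/-
Mellin inversion on the line `Re = 0` writes `f(r)` as `(2π)⁻¹ ∫ (ℳf)(ξ) r^{iξ} dξ`, and
`|r^{iξ}| = 1` for real `ξ`. The decay `⟨ξ⟩^{-s}`, `s > 1`, makes `ℳf` integrable on the real
line, and holomorphy makes it continuous there, so the inversion formula applies.
-/

open MeasureTheory Set

/-- The Mellin transform `(ℳf)(ξ) = ∫₀^∞ f(r) r^{-iξ-1} dr` in the convention of the paper. -/
noncomputable def MellinT (f : ℝ → ℂ) (ξ : ℂ) : ℂ :=
  ∫ r in Ioi (0 : ℝ), f r * (r : ℂ) ^ (-(Complex.I * ξ) - 1)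

open Complex Real

section Inversion

variable {E : Type*} [NormedAddCommGroup E] [NormedSpace ℂ E] [CompleteSpace E]

theorem norm_le_integral_norm_mellin {f : ℝ → E} {σ x : ℝ} (hx : 0 < x)
    (hf : MellinConvergent f σ) (hFf : VerticalIntegrable (mellin f) σ)
    (hfx : ContinuousAt f x) :
    ‖f x‖ ≤ x ^ (-σ) / (2 * π) * ∫ y : ℝ, ‖mellin f (σ + y * I)‖ := by
  have hcpow (y : ℝ) : ‖(x : ℂ) ^ (-(σ + y * I))‖ = x ^ (-σ) := by
    simp [norm_cpow_eq_rpow_re_of_pos hx]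
  calc ‖f x‖ = 1 / (2 * π) * ‖∫ y : ℝ, (x : ℂ) ^ (-(σ + y * I)) • mellin f (σ + y * I)‖ := by
        rw [← mellinInv_mellin_eq σ f hx hf hFf hfx, mellinInv, norm_smul, Real.norm_of_nonneg]
        positivity
    _ ≤ 1 / (2 * π) * ∫ y : ℝ, x ^ (-σ) * ‖mellin f (σ + y * I)‖ := by
        gcongr
        refine (norm_integral_le_integral_norm _).trans_eq (integral_congr_ae ?_)
        exact Filter.Eventually.of_forall fun y => by simp only [norm_smul, hcpow]
    _ = x ^ (-σ) / (2 * π) * ∫ y : ℝ, ‖mellin f (σ + y * I)‖ := by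
        rw [integral_const_mul]; ring

end Inversion

theorem MellinT_eq_mellin (f : ℝ → ℂ) (ξ : ℂ) : MellinT f ξ = mellin f (-(I * ξ)) :=
  setIntegral_congr_fun measurableSet_Ioi fun _ _ => by rw [smul_eq_mul, mul_comm]

theorem mellin_zero_add_mul_I (f : ℝ → ℂ) (y : ℝ) :
    mellin f ((0 : ℝ) + y * I) = MellinT f (-y : ℝ) := by
  rw [MellinT_eq_mellin]; push_cast; ring_nf

theorem integrable_of_norm_le_one_add_sq_rpow {E : Type*} [NormedAddCommGroup E] {g : ℝ → E}
    (hg : AEStronglyMeasurable g) {C s : ℝ} (hs : 1 < s)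
    (hbound : ∀ x, ‖g x‖ ≤ C * (1 + ‖x‖ ^ 2) ^ (-s / 2)) : Integrable g :=
  ((integrable_rpow_neg_one_add_norm_sq (E := ℝ) (by simpa using hs)).const_mul C).mono' hg
    (Filter.Eventually.of_forall hbound)

theorem mellin_bound_general (f : ℝ → ℂ) (hf : ContinuousOn f (Ioi 0))
    (ε : ℝ) (hε : 0 < ε) (C₀ : ℝ) (s : ℝ) (hs : 1 < s)
    (hconv : ∀ ξ : ℂ, -ε < ξ.im →
      IntegrableOn (fun r : ℝ => f r * (r : ℂ) ^ (-(Complex.I * ξ) - 1)) (Ioi 0))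
    (hhol : DifferentiableOn ℂ (MellinT f) {ξ : ℂ | -ε < ξ.im})
    (hbound : ∀ ξ : ℂ, -ε < ξ.im →
      ‖MellinT f ξ‖ ≤ C₀ * (1 + ‖ξ‖ ^ 2) ^ (-s / 2)) :
    Integrable (fun x : ℝ => ‖MellinT f (x : ℂ)‖) ∧
    ∀ r ∈ Ioo (0 : ℝ) 1,
      ‖f r‖ ≤ (1 / (2 * Real.pi)) * ∫ x : ℝ, ‖MellinT f (x : ℂ)‖ := by
  have hreal (x : ℝ) : -ε < (x : ℂ).im := by simpa using hε
  have hcont : Continuous fun x : ℝ => MellinT f x :=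
    hhol.continuousOn.comp_continuous continuous_ofReal hreal
  have hint : Integrable fun x : ℝ => MellinT f x :=
    integrable_of_norm_le_one_add_sq_rpow hcont.aestronglyMeasurable hs fun x => by
      simpa using hbound x (hreal x)
  have hfc : MellinConvergent f 0 :=
    (hconv 0 (by simpa using hε)).congr_fun (fun t _ => by simp [mul_comm]) measurableSet_Ioi
  have hFf : VerticalIntegrable (mellin f) 0 := by
    simpa only [VerticalIntegrable, mellin_zero_add_mul_I] using hint.comp_neg
  refine ⟨hint.norm, fun r hr => ?_⟩
  calc ‖f r‖ ≤ r ^ (-(0 : ℝ)) / (2 * π) * ∫ y : ℝ, ‖mellin f ((0 : ℝ) + y * I)‖ :=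
        norm_le_integral_norm_mellin hr.1 hfc hFf (hf.continuousAt (Ioi_mem_nhds hr.1))
    _ = 1 / (2 * π) * ∫ x : ℝ, ‖MellinT f x‖ := by
        simp only [mellin_zero_add_mul_I, neg_zero, rpow_zero]
        rw [integral_neg_eq_self (fun x : ℝ => ‖MellinT f x‖)]

/-- **Mellin boundedness lemma** (Lemma 3.4).  If `f : (0,∞) → ℂ` is continuous, its
Mellin transform converges absolutely and is holomorphic on `{Im ξ > -ε}` and satisfies
`|(ℳf)(ξ)| ≤ C₀⟨ξ⟩^{-s}` there with `s > 1`, then `f` is bounded on `(0,1)` with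
`sup_{(0,1)} |f| ≤ (2π)^{-1} ∫_{-∞}^∞ |(ℳf)(ξ)| dξ < ∞`. -/
theorem mellin_bound (f : ℝ → ℂ) (hf : ContinuousOn f (Ioi 0))
    (ε : ℝ) (hε : 0 < ε) (C₀ : ℝ) (hC₀ : 0 ≤ C₀) (s : ℝ) (hs : 1 < s)
    (hconv : ∀ ξ : ℂ, -ε < ξ.im →
      IntegrableOn (fun r : ℝ => f r * (r : ℂ) ^ (-(Complex.I * ξ) - 1)) (Ioi 0))
    (hhol : DifferentiableOn ℂ (MellinT f) {ξ : ℂ | -ε < ξ.im})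
    (hbound : ∀ ξ : ℂ, -ε < ξ.im →
      ‖MellinT f ξ‖ ≤ C₀ * (1 + ‖ξ‖ ^ 2) ^ (-s / 2)) :
    Integrable (fun x : ℝ => ‖MellinT f (x : ℂ)‖) ∧
    ∀ r ∈ Ioo (0 : ℝ) 1,
      ‖f r‖ ≤ (1 / (2 * Real.pi)) * ∫ x : ℝ, ‖MellinT f (x : ℂ)‖ :=
  mellin_bound_general f hf ε hε C₀ s hs hconv hhol hbound
end
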